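/- arXiv:1603.03180 — 3 statements merged into one kernel-verified Lean document; each statement's English description precedes it below -/
import Mathlib

section
/- Let M ≥ 2, 1 ≤ i < j ≤ M, and let f, g be probability densities on ℝ^M with zero first moments and finite second moments. Then d_2(R^S_{i,j} f, R^S_{i,j} g) ≤ d_2(f, g). -/
/-!
Rotations in the `(i, j)`-plane preserve Lebesgue measure and `|ζ|`, so by Fubini
`(R^S_{i,j} f)^(ζ) = (2π)⁻¹ ∫₀^{2π} f̂(R_θ ζ) dθ`. Each `|f̂(R_θ ζ) - ĝ(R_θ ζ)|` is at most
`d₂(f, g) |R_θ ζ|² = d₂(f, g) |ζ|²`, hence so is their average.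

A real `⨆` is `0` on unbounded families, so `d2 f g` bounds the quotients only once they are
bounded: the mass and moment conditions give `|f̂(ζ) - 1| ≤ C |ζ|²` by a second-order Taylor
bound on the kernel.
-/

open MeasureTheory Real Filter

noncomputable section

def gaussDensity {k : ℕ} (x : Fin k → ℝ) : ℝ := ∏ i, Real.exp (-Real.pi * (x i) ^ 2)
def gaussDensityP {m n : ℕ} (p : (Fin m → ℝ) × (Fin n → ℝ)) : ℝ :=
  gaussDensity p.1 * gaussDensity p.2

/-- Fourier transform `f̂(ζ) = ∫ e^{-2πi ζ·x} f(x) dx` of a density on `ℝ^k`. -/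
def fourierT {k : ℕ} (f : (Fin k → ℝ) → ℝ) (ζ : Fin k → ℝ) : ℂ :=
  ∫ x : Fin k → ℝ, Complex.exp (-2 * Real.pi * Complex.I * ((∑ i, ζ i * x i : ℝ) : ℂ)) * (f x : ℂ)

/-- Fourier transform of a density on `ℝ^m × ℝ^n`. -/
def fourierTP {m n : ℕ} (f : (Fin m → ℝ) × (Fin n → ℝ) → ℝ)
    (ζ : (Fin m → ℝ) × (Fin n → ℝ)) : ℂ :=
  ∫ p : (Fin m → ℝ) × (Fin n → ℝ),
    Complex.exp (-2 * Real.pi * Complex.I *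
      ((∑ i, ζ.1 i * p.1 i + ∑ j, ζ.2 j * p.2 j : ℝ) : ℂ)) * (f p : ℂ)

/-- Gabetta–Toscani–Wennberg distance `d₂(f,g) = sup_{ζ≠0} |f̂(ζ)-ĝ(ζ)|/|ζ|²` on `ℝ^k`. -/
def d2 {k : ℕ} (f g : (Fin k → ℝ) → ℝ) : ℝ :=
  ⨆ ζ : {ζ : Fin k → ℝ // ζ ≠ 0},
    ‖fourierT f ζ.1 - fourierT g ζ.1‖ / (∑ i, (ζ.1 i) ^ 2)

/-- Gabetta–Toscani–Wennberg distance on `ℝ^m × ℝ^n`. -/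
def d2P {m n : ℕ} (f g : (Fin m → ℝ) × (Fin n → ℝ) → ℝ) : ℝ :=
  ⨆ ζ : {ζ : (Fin m → ℝ) × (Fin n → ℝ) // ζ ≠ 0},
    ‖fourierTP f ζ.1 - fourierTP g ζ.1‖ /
      (∑ i, (ζ.1.1 i) ^ 2 + ∑ j, (ζ.1.2 j) ^ 2)

/-- `f` is a probability density on `ℝ^k`. -/
def IsProbDensity {k : ℕ} (f : (Fin k → ℝ) → ℝ) : Prop :=
  (∀ x, 0 ≤ f x) ∧ Integrable f ∧ ∫ x, f x = 1

/-- `f` has zero first moments and finite second moments. -/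
def ZeroFirstFiniteSecond {k : ℕ} (f : (Fin k → ℝ) → ℝ) : Prop :=
  (∀ i, Integrable (fun x => x i * f x) ∧ ∫ x, x i * f x = 0) ∧
    ∀ i, Integrable fun x => (x i) ^ 2 * f x

/-- `f` is a probability density on `ℝ^m × ℝ^n`. -/
def IsProbDensityP {m n : ℕ} (f : (Fin m → ℝ) × (Fin n → ℝ) → ℝ) : Prop :=
  (∀ p, 0 ≤ f p) ∧ Integrable f ∧ ∫ p, f p = 1

/-- zero first moments and finite second moments, product-space version. -/
def ZeroFirstFiniteSecondP {m n : ℕ} (f : (Fin m → ℝ) × (Fin n → ℝ) → ℝ) : Prop :=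
  ((∀ i, Integrable (fun p => p.1 i * f p) ∧ ∫ p, p.1 i * f p = 0) ∧
    (∀ j, Integrable (fun p => p.2 j * f p) ∧ ∫ p, p.2 j * f p = 0)) ∧
  ((∀ i, Integrable fun p => (p.1 i) ^ 2 * f p) ∧
    (∀ j, Integrable fun p => (p.2 j) ^ 2 * f p))

def circAvg (g : ℝ → ℝ) : ℝ := (1 / (2 * Real.pi)) * ∫ θ in (0:ℝ)..(2 * Real.pi), g θ

def pairRot {k : ℕ} (v : Fin k → ℝ) (i j : Fin k) (θ : ℝ) : Fin k → ℝ :=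
  fun l => if l = i then v i * Real.cos θ + v j * Real.sin θ
    else if l = j then -(v i) * Real.sin θ + v j * Real.cos θ else v l

/-- Kac collision operator `R^S_{i,j}` on densities on `ℝ^m`. -/
def RS1 {m : ℕ} (i j : Fin m) (f : (Fin m → ℝ) → ℝ) (v : Fin m → ℝ) : ℝ :=
  circAvg fun θ => f (pairRot v i j θ)

section PairRotation

variable {k : ℕ} {i j : Fin k}

lemma pairRot_pairRot_neg (hij : i ≠ j) (v : Fin k → ℝ) (θ : ℝ) :
    pairRot (pairRot v i j θ) i j (-θ) = v := by
  funext l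
  simp only [pairRot, if_neg hij.symm, ↓reduceIte, Real.cos_neg, Real.sin_neg]
  split_ifs with hi hj
  · subst hi; linear_combination v l * Real.sin_sq_add_cos_sq θ
  · subst hj; linear_combination v l * Real.sin_sq_add_cos_sq θ
  · rfl

lemma sum_sq_pairRot (hij : i ≠ j) (v : Fin k → ℝ) (θ : ℝ) :
    ∑ l, pairRot v i j θ l ^ 2 = ∑ l, v l ^ 2 := by
  rw [← sub_eq_zero, ← Finset.sum_sub_distrib,
    Fintype.sum_eq_add i j hij fun l ⟨hi, hj⟩ => by simp [pairRot, hi, hj]]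
  simp only [pairRot, if_neg hij.symm, ↓reduceIte]
  linear_combination (v i ^ 2 + v j ^ 2) * Real.sin_sq_add_cos_sq θ

lemma sum_mul_pairRot_neg (hij : i ≠ j) (ζ v : Fin k → ℝ) (θ : ℝ) :
    ∑ l, ζ l * pairRot v i j (-θ) l = ∑ l, pairRot ζ i j θ l * v l := by
  rw [← sub_eq_zero, ← Finset.sum_sub_distrib,
    Fintype.sum_eq_add i j hij fun l ⟨hi, hj⟩ => by simp [pairRot, hi, hj]]
  simp only [pairRot, if_neg hij.symm, ↓reduceIte, Real.cos_neg, Real.sin_neg]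
  ring

lemma continuous_pairRot (i j : Fin k) :
    Continuous fun p : ℝ × (Fin k → ℝ) => pairRot p.2 i j p.1 :=
  continuous_pi fun l => by unfold pairRot; split_ifs <;> fun_prop

def pairRotEquiv (hij : i ≠ j) (θ : ℝ) : (Fin k → ℝ) ≃ₗ[ℝ] (Fin k → ℝ) where
  toFun v := pairRot v i j θ
  invFun v := pairRot v i j (-θ)
  map_add' u v := by funext l; simp only [pairRot, Pi.add_apply]; split_ifs <;> ring
  map_smul' c v := by
    funext l; simp only [pairRot, Pi.smul_apply, smul_eq_mul, RingHom.id_apply]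
    split_ifs <;> ring
  left_inv v := pairRot_pairRot_neg hij v θ
  right_inv v := by simpa using pairRot_pairRot_neg hij v (-θ)

def pairRotIsometry (hij : i ≠ j) (θ : ℝ) :
    EuclideanSpace ℝ (Fin k) ≃ₗᵢ[ℝ] EuclideanSpace ℝ (Fin k) where
  toLinearEquiv := (WithLp.linearEquiv 2 ℝ (Fin k → ℝ)).trans
    ((pairRotEquiv hij θ).trans (WithLp.linearEquiv 2 ℝ (Fin k → ℝ)).symm)
  norm_map' x := by
    simp [EuclideanSpace.norm_eq, pairRotEquiv, sum_sq_pairRot hij]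

lemma measurePreserving_pairRot (hij : i ≠ j) (θ : ℝ) :
    MeasurePreserving (fun v : Fin k → ℝ => pairRot v i j θ) :=
  (PiLp.volume_preserving_ofLp _).comp
    ((pairRotIsometry hij θ).measurePreserving.comp (PiLp.volume_preserving_toLp _))

end PairRotation

section FourierRotation

variable {k : ℕ} {i j : Fin k}

def fourierKer (ζ x : Fin k → ℝ) : ℂ :=
  Complex.exp (-2 * π * Complex.I * ((∑ l, ζ l * x l : ℝ) : ℂ))

lemma fourierT_eq_integral_fourierKer (f : (Fin k → ℝ) → ℝ) (ζ : Fin k → ℝ) :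
    fourierT f ζ = ∫ x, fourierKer ζ x * (f x : ℂ) := rfl

lemma norm_fourierKer (ζ x : Fin k → ℝ) : ‖fourierKer ζ x‖ = 1 := by
  rw [fourierKer, Complex.norm_exp]
  simp

lemma continuous_fourierKer (ζ : Fin k → ℝ) : Continuous (fourierKer ζ) := by
  unfold fourierKer; fun_prop

lemma fourierKer_pairRot (hij : i ≠ j) (ζ x : Fin k → ℝ) (θ : ℝ) :
    fourierKer (pairRot ζ i j θ) (pairRot x i j θ) = fourierKer ζ x := by
  rw [fourierKer, ← sum_mul_pairRot_neg hij, pairRot_pairRot_neg hij, fourierKer]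

lemma fourierT_comp_pairRot (hij : i ≠ j) (f : (Fin k → ℝ) → ℝ) (ζ : Fin k → ℝ) (θ : ℝ) :
    fourierT (fun x => f (pairRot x i j θ)) ζ = fourierT f (pairRot ζ i j θ) := by
  simp only [fourierT_eq_integral_fourierKer, ← fourierKer_pairRot hij ζ _ θ]
  exact (measurePreserving_pairRot hij θ).integral_comp
    (pairRotEquiv hij θ).toContinuousLinearEquiv.toHomeomorph.measurableEmbedding
    fun y => fourierKer (pairRot ζ i j θ) y * (f y : ℂ)

lemma integrable_comp_pairRot_prod (hij : i ≠ j) {f : (Fin k → ℝ) → ℝ} (hf : Integrable f)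
    (μ : Measure ℝ) [IsFiniteMeasure μ] :
    Integrable (fun p : ℝ × (Fin k → ℝ) => f (pairRot p.2 i j p.1)) (μ.prod volume) := by
  have hskew : MeasurePreserving (fun p : ℝ × (Fin k → ℝ) => (p.1, pairRot p.2 i j p.1))
      (μ.prod volume) (μ.prod volume) :=
    (MeasurePreserving.id μ).skew_product (continuous_pairRot i j).measurable
      (Eventually.of_forall fun θ => (measurePreserving_pairRot hij θ).map_eq)
  exact hskew.integrable_comp_of_integrable (hf.comp_snd μ)

lemma integrable_fourierKer_mul_comp_pairRot_prod (hij : i ≠ j) {f : (Fin k → ℝ) → ℝ}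
    (hf : Integrable f) (ζ : Fin k → ℝ) (μ : Measure ℝ) [IsFiniteMeasure μ] :
    Integrable (fun p : ℝ × (Fin k → ℝ) => fourierKer ζ p.2 * (f (pairRot p.2 i j p.1) : ℂ))
      (μ.prod volume) :=
  (integrable_comp_pairRot_prod hij hf μ).ofReal.bdd_mul
    ((continuous_fourierKer ζ).comp continuous_snd).aestronglyMeasurable
    (Eventually.of_forall fun p => (norm_fourierKer ζ p.2).le)

lemma intervalIntegrable_fourierT_pairRot (hij : i ≠ j) {f : (Fin k → ℝ) → ℝ}
    (hf : Integrable f) (ζ : Fin k → ℝ) (a b : ℝ) :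
    IntervalIntegrable (fun θ => fourierT f (pairRot ζ i j θ)) volume a b := by
  rw [intervalIntegrable_iff, Set.uIoc]
  simp only [← fourierT_comp_pairRot hij]
  exact (integrable_fourierKer_mul_comp_pairRot_prod hij hf ζ _).integral_prod_left

lemma fourierT_RS1 (hij : i ≠ j) {f : (Fin k → ℝ) → ℝ} (hf : Integrable f) (ζ : Fin k → ℝ) :
    fourierT (RS1 i j f) ζ = (2 * π)⁻¹ • ∫ θ in 0..2 * π, fourierT f (pairRot ζ i j θ) := by
  set μ := volume.restrict (Set.Ioc 0 (2 * π))
  have hRS : ∀ x, (RS1 i j f x : ℂ) = (2 * π)⁻¹ • ∫ θ, (f (pairRot x i j θ) : ℂ) ∂μ := by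
    intro x
    rw [RS1, circAvg, intervalIntegral.integral_of_le Real.two_pi_pos.le, Complex.ofReal_mul,
      ← integral_complex_ofReal, one_div, Complex.real_smul]
  calc fourierT (RS1 i j f) ζ
      = (2 * π)⁻¹ • ∫ x : Fin k → ℝ, ∫ θ, fourierKer ζ x * (f (pairRot x i j θ) : ℂ) ∂μ := by
        simp_rw [fourierT_eq_integral_fourierKer, hRS, mul_smul_comm, ← integral_const_mul]
        rw [integral_smul]
    _ = (2 * π)⁻¹ • ∫ θ, (∫ x : Fin k → ℝ, fourierKer ζ x * (f (pairRot x i j θ) : ℂ)) ∂μ := by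
        rw [← integral_integral_swap (integrable_fourierKer_mul_comp_pairRot_prod hij hf ζ μ)]
    _ = (2 * π)⁻¹ • ∫ θ in 0..2 * π, fourierT f (pairRot ζ i j θ) := by
        rw [intervalIntegral.integral_of_le Real.two_pi_pos.le]
        simp only [← fourierT_comp_pairRot hij, fourierT_eq_integral_fourierKer, μ]

end FourierRotation

lemma norm_exp_mul_I_sub_one_sub_le (r : ℝ) :
    ‖Complex.exp (r * Complex.I) - 1 - r * Complex.I‖ ≤ 2 * r ^ 2 := by
  rcases le_or_gt |r| 1 with h | h
  · have := Complex.norm_exp_sub_one_sub_id_le (x := r * Complex.I) (by simpa using h)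
    rw [norm_mul, Complex.norm_I, mul_one, Complex.norm_real, Real.norm_eq_abs, sq_abs] at this
    nlinarith [sq_nonneg r]
  · calc ‖Complex.exp (r * Complex.I) - 1 - r * Complex.I‖
        ≤ ‖Complex.exp (r * Complex.I) - 1‖ + ‖(r : ℂ) * Complex.I‖ := norm_sub_le _ _
      _ ≤ |r| + |r| := by
        gcongr
        · simpa [mul_comm] using Real.norm_exp_I_mul_ofReal_sub_one_le (x := r)
        · simp
      _ ≤ 2 * r ^ 2 := by nlinarith [sq_abs r]

section Moments

variable {k : ℕ} {f : (Fin k → ℝ) → ℝ}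

lemma ZeroFirstFiniteSecond.integrable_sum_mul_mul (hfm : ZeroFirstFiniteSecond f)
    (ζ : Fin k → ℝ) : Integrable fun x => (∑ l, ζ l * x l) * f x := by
  simp_rw [Finset.sum_mul, mul_assoc]
  exact integrable_finsetSum _ fun l _ => (hfm.1 l).1.const_mul (ζ l)

lemma ZeroFirstFiniteSecond.integral_sum_mul_mul (hfm : ZeroFirstFiniteSecond f)
    (ζ : Fin k → ℝ) : ∫ x, (∑ l, ζ l * x l) * f x = 0 := by
  simp_rw [Finset.sum_mul, mul_assoc]
  rw [integral_finsetSum _ fun l _ => (hfm.1 l).1.const_mul (ζ l)]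
  simp [integral_const_mul, (hfm.1 _).2]

lemma ZeroFirstFiniteSecond.integrable_sum_sq_mul (hfm : ZeroFirstFiniteSecond f) :
    Integrable fun x => (∑ l, x l ^ 2) * f x := by
  simp_rw [Finset.sum_mul]
  exact integrable_finsetSum _ fun l _ => hfm.2 l

lemma ZeroFirstFiniteSecond.integral_sum_sq_mul (hfm : ZeroFirstFiniteSecond f) :
    ∫ x, (∑ l, x l ^ 2) * f x = ∑ l, ∫ x, x l ^ 2 * f x := by
  simp_rw [Finset.sum_mul]
  exact integral_finsetSum _ fun l _ => hfm.2 l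

lemma fourierT_sub_one_eq_integral (hf : IsProbDensity f) (hfm : ZeroFirstFiniteSecond f)
    (ζ : Fin k → ℝ) :
    fourierT f ζ - 1 = ∫ x, (Complex.exp ((-2 * π * ∑ l, ζ l * x l : ℝ) * Complex.I) - 1
      - (-2 * π * ∑ l, ζ l * x l : ℝ) * Complex.I) * (f x : ℂ) := by
  have hmass : ∫ x, (f x : ℂ) = 1 := by rw [integral_complex_ofReal, hf.2.2, Complex.ofReal_one]
  have hmean : ∫ x, ((-2 * π * ((∑ l, ζ l * x l) * f x) : ℝ) : ℂ) * Complex.I = 0 := by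
    rw [integral_mul_const, integral_complex_ofReal, integral_const_mul,
      hfm.integral_sum_mul_mul, mul_zero, Complex.ofReal_zero, zero_mul]
  have hexp : Integrable fun x => fourierKer ζ x * (f x : ℂ) :=
    hf.2.1.ofReal.bdd_mul (continuous_fourierKer ζ).aestronglyMeasurable
      (Eventually.of_forall fun x => (norm_fourierKer ζ x).le)
  have hint : Integrable fun x => (f x : ℂ) := hf.2.1.ofReal
  have hlin : Integrable fun x => ((-2 * π * ((∑ l, ζ l * x l) * f x) : ℝ) : ℂ) * Complex.I :=
    (((hfm.integrable_sum_mul_mul ζ).const_mul _).ofReal).mul_const _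
  calc fourierT f ζ - 1
      = (∫ x, fourierKer ζ x * (f x : ℂ)) - (∫ x, (f x : ℂ))
          - ∫ x, ((-2 * π * ((∑ l, ζ l * x l) * f x) : ℝ) : ℂ) * Complex.I := by
        rw [hmass, hmean, sub_zero, fourierT_eq_integral_fourierKer]
    _ = ∫ x, (fourierKer ζ x * (f x : ℂ) - (f x : ℂ)
          - ((-2 * π * ((∑ l, ζ l * x l) * f x) : ℝ) : ℂ) * Complex.I) := by
        rw [← integral_sub hexp hint]
        exact (integral_sub (hexp.sub hint) hlin).symm
    _ = _ := by
        congr 1 with x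
        rw [fourierKer]
        push_cast
        ring_nf

lemma norm_fourierT_sub_one_le (hf : IsProbDensity f) (hfm : ZeroFirstFiniteSecond f)
    (ζ : Fin k → ℝ) :
    ‖fourierT f ζ - 1‖ ≤ 8 * π ^ 2 * (∑ l, ζ l ^ 2) * ∑ l, ∫ x, x l ^ 2 * f x := by
  rw [fourierT_sub_one_eq_integral hf hfm, ← hfm.integral_sum_sq_mul, ← integral_const_mul]
  refine (norm_integral_le_integral_norm _).trans (integral_mono_of_nonneg
    (Eventually.of_forall fun x => norm_nonneg _) (hfm.integrable_sum_sq_mul.const_mul _)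
    (Eventually.of_forall fun x => ?_))
  have hCS : (∑ l, ζ l * x l) ^ 2 ≤ (∑ l, ζ l ^ 2) * ∑ l, x l ^ 2 :=
    Finset.sum_mul_sq_le_sq_mul_sq _ _ _
  dsimp only
  rw [norm_mul, Complex.norm_real, Real.norm_of_nonneg (hf.1 x)]
  calc _ ≤ 2 * (-2 * π * ∑ l, ζ l * x l) ^ 2 * f x :=
        mul_le_mul_of_nonneg_right (norm_exp_mul_I_sub_one_sub_le _) (hf.1 x)
    _ ≤ _ := by
        have := mul_le_mul_of_nonneg_left hCS (by positivity : (0 : ℝ) ≤ 8 * π ^ 2)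
        nlinarith [hf.1 x]

end Moments

section GTW

variable {k : ℕ}

lemma sum_sq_pos {ζ : Fin k → ℝ} (hζ : ζ ≠ 0) : 0 < ∑ l, ζ l ^ 2 := by
  obtain ⟨l, hl⟩ := Function.ne_iff.1 hζ
  exact Finset.sum_pos' (fun _ _ => sq_nonneg _) ⟨l, Finset.mem_univ l, pow_two_pos_of_ne_zero hl⟩

lemma pairRot_ne_zero {i j : Fin k} (hij : i ≠ j) {ζ : Fin k → ℝ} (hζ : ζ ≠ 0) (θ : ℝ) :
    pairRot ζ i j θ ≠ 0 :=
  (pairRotEquiv hij θ).map_ne_zero_iff.2 hζ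

lemma norm_fourierT_sub_le_d2_mul {f g : (Fin k → ℝ) → ℝ}
    (hf : IsProbDensity f) (hfm : ZeroFirstFiniteSecond f)
    (hg : IsProbDensity g) (hgm : ZeroFirstFiniteSecond g) {ζ : Fin k → ℝ} (hζ : ζ ≠ 0) :
    ‖fourierT f ζ - fourierT g ζ‖ ≤ d2 f g * ∑ l, ζ l ^ 2 := by
  have hbdd : BddAbove (Set.range fun ξ : {ξ : Fin k → ℝ // ξ ≠ 0} =>
      ‖fourierT f ξ.1 - fourierT g ξ.1‖ / ∑ l, ξ.1 l ^ 2) := by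
    refine ⟨8 * π ^ 2 * ((∑ l, ∫ x, x l ^ 2 * f x) + ∑ l, ∫ x, x l ^ 2 * g x), ?_⟩
    rintro _ ⟨ξ, rfl⟩
    rw [div_le_iff₀ (sum_sq_pos ξ.2)]
    calc ‖fourierT f ξ.1 - fourierT g ξ.1‖
        ≤ ‖fourierT f ξ.1 - 1‖ + ‖fourierT g ξ.1 - 1‖ := by
          rw [← norm_sub_rev 1 (fourierT g ξ.1)]
          exact norm_sub_le_norm_sub_add_norm_sub _ _ _
      _ ≤ _ := add_le_add (norm_fourierT_sub_one_le hf hfm ξ) (norm_fourierT_sub_one_le hg hgm ξ)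
      _ = _ := by ring
  rw [← div_le_iff₀ (sum_sq_pos hζ)]
  exact le_ciSup hbdd ⟨ζ, hζ⟩

lemma norm_fourierT_RS1_sub_le {i j : Fin k} (hij : i ≠ j) {f g : (Fin k → ℝ) → ℝ}
    (hf : Integrable f) (hg : Integrable g) {C : ℝ}
    (hC : ∀ ξ : Fin k → ℝ, ξ ≠ 0 → ‖fourierT f ξ - fourierT g ξ‖ ≤ C * ∑ l, ξ l ^ 2)
    {ζ : Fin k → ℝ} (hζ : ζ ≠ 0) :
    ‖fourierT (RS1 i j f) ζ - fourierT (RS1 i j g) ζ‖ ≤ C * ∑ l, ζ l ^ 2 := by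
  have hrot : ∀ θ, ‖fourierT f (pairRot ζ i j θ) - fourierT g (pairRot ζ i j θ)‖
      ≤ C * ∑ l, ζ l ^ 2 := fun θ => by
    simpa only [sum_sq_pairRot hij] using hC _ (pairRot_ne_zero hij hζ θ)
  rw [fourierT_RS1 hij hf, fourierT_RS1 hij hg, ← smul_sub,
    ← intervalIntegral.integral_sub (intervalIntegrable_fourierT_pairRot hij hf ζ _ _)
      (intervalIntegrable_fourierT_pairRot hij hg ζ _ _), norm_smul]
  calc ‖(2 * π)⁻¹‖ * ‖∫ θ in 0..2 * π,
        (fourierT f (pairRot ζ i j θ) - fourierT g (pairRot ζ i j θ))‖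
      ≤ ‖(2 * π)⁻¹‖ * (C * ∑ l, ζ l ^ 2) * |2 * π - 0| := by
        rw [mul_assoc]
        gcongr
        exact intervalIntegral.norm_integral_le_of_norm_le_const fun θ _ => hrot θ
    _ = C * ∑ l, ζ l ^ 2 := by
        rw [sub_zero, Real.norm_of_nonneg (by positivity), abs_of_pos Real.two_pi_pos]
        field_simp

end GTW

theorem d2_RS_contraction_general (M : ℕ) (i j : Fin M) (hij : i < j)
    (f g : (Fin M → ℝ) → ℝ)
    (hf : IsProbDensity f) (hg : IsProbDensity g)
    (hfm : ZeroFirstFiniteSecond f) (hgm : ZeroFirstFiniteSecond g) :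
    d2 (RS1 i j f) (RS1 i j g) ≤ d2 f g := by
  refine Real.iSup_le (fun ζ => ?_) (Real.iSup_nonneg fun _ => by positivity)
  rw [div_le_iff₀ (sum_sq_pos ζ.2)]
  exact norm_fourierT_RS1_sub_le hij.ne hf.2.1 hg.2.1
    (fun _ => norm_fourierT_sub_le_d2_mul hf hfm hg hgm) ζ.2

/-- **The Kac collision operator is a contraction in the GTW metric** (eq. (4.11)). -/
theorem d2_RS_contraction (M : ℕ) (hM : 2 ≤ M) (i j : Fin M) (hij : i < j)
    (f g : (Fin M → ℝ) → ℝ)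
    (hf : IsProbDensity f) (hg : IsProbDensity g)
    (hfm : ZeroFirstFiniteSecond f) (hgm : ZeroFirstFiniteSecond g) :
    d2 (RS1 i j f) (RS1 i j g) ≤ d2 f g :=
  d2_RS_contraction_general M i j hij f g hf hg hfm hgm
end
end

section
/- Let H : ℝ → ℝ be a bounded C⁴ function with H(0) = 0, H(η) = H(−η) for all η, and C_4 := max_{0≤p≤4} sup_η |H^{(p)}(η)| < ∞. Then for every a ≥ 0 and every N ≥ 1, D_N(H, a) ≤ [ (8 C_4 + D_1(H,a)) · D_1(H,a) ]^{1/2}. -/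
open MeasureTheory Real Filter

noncomputable section

/-- `D_N(H,a) = sup_{η ≠ 0} |Σⱼ H(ηⱼ) Γ_{N-1}(η^j)| / (a² + |η|²)`, where
`Γ_{N-1}(η^j) = ∏_{i≠j} e^{-π ηᵢ²}`. -/
def DN (N : ℕ) (H : ℝ → ℝ) (a : ℝ) : ℝ :=
  ⨆ η : {η : Fin N → ℝ // η ≠ 0},
    |∑ j, H (η.1 j) * ∏ i ∈ Finset.univ.erase j, Real.exp (-Real.pi * (η.1 i) ^ 2)| /
      (a ^ 2 + ∑ i, (η.1 i) ^ 2)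

/-- `C₄ = max_{p ≤ 4} sup_η |H⁽ᵖ⁾(η)|`. -/
def derivBound4 (H : ℝ → ℝ) : ℝ :=
  ⨆ p : Fin 5, ⨆ η : ℝ, |iteratedDeriv (p : ℕ) H η|

/-!
Taylor's theorem at `0` for the even function `H` gives `|H y| ≤ C₄ y² / 2` and
`|H y - c y²| ≤ C₄ y⁴ / 24` with `c = H''(0) / 2`. Comparing the second bound with
`|H y| ≤ D₁ (a² + y²)` at the optimal scale of `y²` controls `|c|`, and yields
`|H y| ≤ (D₁ + 5|a|ν) y² + 2ν|y|³` with `ν = √(D₁ C₄ / 24)`.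

In the sum defining `D_N`, the term of a largest coordinate `η_m` is at most `D₁ (a² + |η|²)`.
Every other coordinate has `η_j² ≤ |η|² / 2`, so its weight `Γ_{N-1}(η^j)` is at most
`e^{-π|η|²/2}`, and these terms add up to at most
`(D₁ + 5|a|ν + 2ν|η|) |η|² e^{-π|η|²/2} ≤ (D₁ + 5ν/2 + 2ν) (a² + |η|²)`, independently of `N`.
So `D_N ≤ 2D₁ + 9ν/2`, and this is at most `√((8C₄ + D₁) D₁)` because `D₁ ≤ C₄ / 2`.
-/

open Finset Topology
open scoped Nat

lemma abs_sub_taylor_le {f : ℝ → ℝ} {n : ℕ} (hf : ContDiff ℝ (n + 1) f) {M : ℝ}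
    (hM : ∀ y, |iteratedDeriv (n + 1) f y| ≤ M) (x₀ x : ℝ) :
    |f x - ∑ k ∈ range (n + 1), iteratedDeriv k f x₀ / k ! * (x - x₀) ^ k| ≤
      M * |x - x₀| ^ (n + 1) / (n + 1)! := by
  rcases eq_or_ne x₀ x with rfl | hx
  · simp [sum_range_succ']
  obtain ⟨x', -, hx'⟩ := taylor_mean_remainder_lagrange_iteratedDeriv hx hf.contDiffOn
  have hpoly : taylorWithinEval f n (Set.uIcc x₀ x) x₀ x =
      ∑ k ∈ range (n + 1), iteratedDeriv k f x₀ / k ! * (x - x₀) ^ k := by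
    rw [taylor_within_apply]
    refine sum_congr rfl fun k hk => ?_
    rw [iteratedDerivWithin_eq_iteratedDeriv (uniqueDiffOn_uIcc hx)
      ((hf.of_le (by exact_mod_cast (mem_range.1 hk).le)).contDiffAt) Set.left_mem_uIcc,
      smul_eq_mul]
    ring
  rw [← hpoly, hx', abs_div, abs_mul, abs_pow, Nat.abs_cast]
  gcongr
  exact hM x'

lemma Function.Even.iteratedDeriv_zero_of_odd {f : ℝ → ℝ} (hf : Function.Even f) {n : ℕ}
    (hn : Odd n) : iteratedDeriv n f 0 = 0 := by
  have h := iteratedDeriv_comp_neg n f 0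
  simp only [hf _, neg_zero, hn.neg_one_pow, neg_one_smul] at h
  linarith

lemma le_two_mul_sqrt_mul_of_forall_le {x p q : ℝ} (hp : 0 ≤ p) (hq : 0 ≤ q)
    (h : ∀ t > 0, x ≤ p / t + q * t) : x ≤ 2 * √(p * q) := by
  -- take `t = √(p + ε) / √(q + ε)` and let `ε → 0`; this also covers `p * q = 0`
  have hε : ∀ ε > 0, x ≤ 2 * (√(p + ε) * √(q + ε)) := by
    intro ε hε
    have hsp : 0 < √(p + ε) := sqrt_pos.2 (by linarith)
    have hsq : 0 < √(q + ε) := sqrt_pos.2 (by linarith)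
    have ht : 0 < √(p + ε) / √(q + ε) := div_pos hsp hsq
    calc x ≤ p / (√(p + ε) / √(q + ε)) + q * (√(p + ε) / √(q + ε)) := h _ ht
      _ ≤ (p + ε) / (√(p + ε) / √(q + ε)) + (q + ε) * (√(p + ε) / √(q + ε)) := by
        gcongr <;> linarith
      _ = 2 * (√(p + ε) * √(q + ε)) := by
        field_simp
        rw [sq_sqrt (by linarith), sq_sqrt (by linarith)]
        ring
  have hlim : Tendsto (fun ε => 2 * (√(p + ε) * √(q + ε))) (𝓝[>] 0) (𝓝 (2 * (√p * √q))) := by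
    have : Continuous fun ε => 2 * (√(p + ε) * √(q + ε)) := by fun_prop
    simpa using (this.tendsto 0).mono_left nhdsWithin_le_nhds
  rw [sqrt_mul hp]
  exact ge_of_tendsto hlim (eventually_nhdsWithin_of_forall hε)

lemma min_le_sqrt_mul {p q : ℝ} (hp : 0 ≤ p) (hq : 0 ≤ q) : min p q ≤ √(p * q) := by
  have h0 : 0 ≤ min p q := le_min hp hq
  calc min p q = √(min p q * min p q) := (sqrt_mul_self h0).symm
    _ ≤ √(p * q) := by gcongr <;> simp

lemma min_add_le_min_add_min {p q r : ℝ} (hp : 0 ≤ p) (hq : 0 ≤ q) (hr : 0 ≤ r) :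
    min p (q + r) ≤ min p q + min p r := by
  rcases le_total p q with h | h <;> rcases le_total p r with h' | h' <;>
    simp only [min_eq_left, min_eq_right, h, h'] <;> grind

section QuadraticApprox

variable {f : ℝ → ℝ} {a c D K : ℝ}

lemma abs_coeff_le_of_quadratic_approx (hD : ∀ y, |f y| ≤ D * (a ^ 2 + y ^ 2))
    (hK : ∀ y, |f y - c * y ^ 2| ≤ K * y ^ 4) : |c| ≤ D + 2 * |a| * √(D * K) := by
  have hD0 : 0 ≤ D := nonneg_of_mul_nonneg_left ((abs_nonneg _).trans (hD 1)) (by positivity)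
  have hK0 : 0 ≤ K := by simpa using (abs_nonneg _).trans (hK 1)
  have key : |c| - D ≤ 2 * √(D * a ^ 2 * K) := by
    refine le_two_mul_sqrt_mul_of_forall_le (by positivity) hK0 fun t ht => ?_
    obtain ⟨y, hy, rfl⟩ : ∃ y, 0 < y ∧ y ^ 2 = t := ⟨√t, sqrt_pos.2 ht, sq_sqrt ht.le⟩
    have hcy : |c| * y ^ 2 ≤ |f y| + |f y - c * y ^ 2| := by
      calc |c| * y ^ 2 = |f y - (f y - c * y ^ 2)| := by rw [sub_sub_cancel, abs_mul, abs_sq]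
        _ ≤ |f y| + |f y - c * y ^ 2| := abs_sub _ _
    rw [div_add' _ _ _ ht.ne', le_div_iff₀ ht]
    nlinarith [hD y, hK y]
  rw [show D * a ^ 2 * K = a ^ 2 * (D * K) by ring, sqrt_mul (sq_nonneg a), sqrt_sq_eq_abs] at key
  linarith

lemma abs_le_of_quadratic_approx (hD : ∀ y, |f y| ≤ D * (a ^ 2 + y ^ 2))
    (hK : ∀ y, |f y - c * y ^ 2| ≤ K * y ^ 4) (y : ℝ) :
    |f y| ≤ (D + 5 * |a| * √(D * K)) * y ^ 2 + 2 * √(D * K) * |y| ^ 3 := by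
  have hD0 : 0 ≤ D := nonneg_of_mul_nonneg_left ((abs_nonneg _).trans (hD 1)) (by positivity)
  have hK0 : 0 ≤ K := by simpa using (abs_nonneg _).trans (hK 1)
  have hc := abs_coeff_le_of_quadratic_approx hD hK
  set ν := √(D * K)
  have hν : 0 ≤ ν := sqrt_nonneg _
  have hrem : |f y - c * y ^ 2| ≤
      min (K * y ^ 4) (D * a ^ 2 + 2 * D * y ^ 2 + 2 * |a| * ν * y ^ 2) := by
    refine le_min (hK y) ?_
    have := abs_sub (f y) (c * y ^ 2)
    rw [abs_mul, abs_sq] at this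
    nlinarith [hD y, sq_nonneg y]
  have hconst : min (K * y ^ 4) (D * a ^ 2) ≤ |a| * ν * y ^ 2 := by
    refine (min_le_sqrt_mul (by positivity) (by positivity)).trans_eq ?_
    rw [show K * y ^ 4 * (D * a ^ 2) = (|a| * y ^ 2) ^ 2 * (D * K) by
      rw [mul_pow, sq_abs]; ring,
      sqrt_mul (sq_nonneg _), sqrt_sq (by positivity)]
    ring
  have hquad : min (K * y ^ 4) (2 * D * y ^ 2) ≤ 2 * ν * |y| ^ 3 := by
    refine (min_le_sqrt_mul (by positivity) (by positivity)).trans ?_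
    calc √(K * y ^ 4 * (2 * D * y ^ 2)) ≤ √((2 * |y| ^ 3) ^ 2 * (D * K)) := by
          have h6 : (|y| ^ 3) ^ 2 = y ^ 6 := by rw [← abs_pow, sq_abs]; ring
          apply sqrt_le_sqrt
          rw [mul_pow, h6]
          nlinarith [mul_nonneg (mul_nonneg hD0 hK0) (pow_nonneg (sq_nonneg y) 3)]
      _ = 2 * ν * |y| ^ 3 := by
          rw [sqrt_mul (sq_nonneg _), sqrt_sq (by positivity)]
          ring
  have hsplit : min (K * y ^ 4) (D * a ^ 2 + 2 * D * y ^ 2 + 2 * |a| * ν * y ^ 2) ≤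
      min (K * y ^ 4) (D * a ^ 2) + min (K * y ^ 4) (2 * D * y ^ 2) + 2 * |a| * ν * y ^ 2 :=
    (min_add_le_min_add_min (by positivity) (by positivity) (by positivity)).trans
      (add_le_add (min_add_le_min_add_min (by positivity) (by positivity) (by positivity))
        (min_le_right _ _))
  have htri : |f y| ≤ |c| * y ^ 2 + |f y - c * y ^ 2| := by
    calc |f y| = |c * y ^ 2 + (f y - c * y ^ 2)| := by rw [add_sub_cancel]
      _ ≤ |c * y ^ 2| + |f y - c * y ^ 2| := abs_add_le _ _
      _ = |c| * y ^ 2 + |f y - c * y ^ 2| := by rw [abs_mul, abs_sq]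
  nlinarith [mul_le_mul_of_nonneg_right hc (sq_nonneg y)]

end QuadraticApprox

section GaussianWeights

variable {ι : Type*} [Fintype ι] [DecidableEq ι]

/-- The weight `Γ_{N-1}(η^j)` of the `j`-th term in `DN`. -/
def gaussianExcept (x : ι → ℝ) (j : ι) : ℝ :=
  ∏ i ∈ univ.erase j, exp (-π * x i ^ 2)

variable {x : ι → ℝ} {m : ι}

lemma gaussianExcept_eq (x : ι → ℝ) (j : ι) :
    gaussianExcept x j = exp (-π * (∑ i, x i ^ 2 - x j ^ 2)) := by
  rw [gaussianExcept, ← exp_sum, ← mul_sum, sum_erase_eq_sub (mem_univ j)]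

lemma gaussianExcept_pos (x : ι → ℝ) (j : ι) : 0 < gaussianExcept x j :=
  prod_pos fun _ _ => exp_pos _

lemma gaussianExcept_le_one (x : ι → ℝ) (j : ι) : gaussianExcept x j ≤ 1 := by
  rw [gaussianExcept_eq, exp_le_one_iff]
  have := single_le_sum (fun i _ => sq_nonneg (x i)) (mem_univ j)
  nlinarith [pi_pos]

lemma gaussianExcept_le_exp_half (hm : ∀ i, x i ^ 2 ≤ x m ^ 2) {j : ι} (hj : j ≠ m) :
    gaussianExcept x j ≤ exp (-π * (∑ i, x i ^ 2) / 2) := by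
  have hpair : x j ^ 2 + x m ^ 2 ≤ ∑ i, x i ^ 2 := by
    have := sum_le_univ_sum_of_nonneg (s := {j, m}) fun i => sq_nonneg (x i)
    rwa [sum_pair hj] at this
  rw [gaussianExcept_eq, exp_le_exp]
  nlinarith [pi_pos, hm j]

lemma mul_exp_neg_le_sqrt {r : ℝ} (hr : 0 ≤ r) : r * exp (-π * r / 2) ≤ √r := by
  have hsq : √r * √r = r := mul_self_sqrt hr
  have hexp : √r ≤ exp (π * r / 2) := by
    nlinarith [add_one_le_exp (π * r / 2), sq_nonneg (√r - 1), pi_gt_three]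
  have h1 : √r * exp (-π * r / 2) ≤ 1 := by
    rw [neg_mul, neg_div, exp_neg, ← div_eq_mul_inv, div_le_one (exp_pos _)]
    exact hexp
  calc r * exp (-π * r / 2) = √r * (√r * exp (-π * r / 2)) := by rw [← mul_assoc, hsq]
    _ ≤ √r * 1 := by gcongr
    _ = √r := mul_one _

lemma sum_erase_sq_mul_gaussianExcept_le (hm : ∀ i, x i ^ 2 ≤ x m ^ 2) :
    ∑ j ∈ univ.erase m, x j ^ 2 * gaussianExcept x j ≤
      (∑ i, x i ^ 2) * exp (-π * (∑ i, x i ^ 2) / 2) := by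
  calc ∑ j ∈ univ.erase m, x j ^ 2 * gaussianExcept x j
      ≤ ∑ j ∈ univ.erase m, x j ^ 2 * exp (-π * (∑ i, x i ^ 2) / 2) :=
        sum_le_sum fun j hj => by
          gcongr
          exact gaussianExcept_le_exp_half hm (ne_of_mem_erase hj)
    _ ≤ (∑ i, x i ^ 2) * exp (-π * (∑ i, x i ^ 2) / 2) := by
        rw [← sum_mul]
        exact mul_le_mul_of_nonneg_right (sum_le_univ_sum_of_nonneg fun i => sq_nonneg (x i))
          (exp_pos _).le

lemma sum_erase_abs_mul_gaussianExcept_le {f : ℝ → ℝ} {α β : ℝ} (hm : ∀ i, x i ^ 2 ≤ x m ^ 2)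
    (hf : ∀ y, |f y| ≤ α * y ^ 2 + β * |y| ^ 3) (hα : 0 ≤ α) (hβ : 0 ≤ β) :
    ∑ j ∈ univ.erase m, |f (x j)| * gaussianExcept x j ≤
      (α + β * √(∑ i, x i ^ 2)) * ((∑ i, x i ^ 2) * exp (-π * (∑ i, x i ^ 2) / 2)) := by
  set ϱ := ∑ i, x i ^ 2
  have hterm : ∀ j, |f (x j)| ≤ (α + β * √ϱ) * x j ^ 2 := fun j => by
    have hxj : |x j| ≤ √ϱ := by
      rw [← sqrt_sq_eq_abs]
      exact sqrt_le_sqrt (single_le_sum (fun i _ => sq_nonneg (x i)) (mem_univ j))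
    calc |f (x j)| ≤ α * x j ^ 2 + β * |x j| ^ 3 := hf (x j)
      _ = α * x j ^ 2 + β * (|x j| * x j ^ 2) := by rw [← sq_abs (x j)]; ring
      _ ≤ (α + β * √ϱ) * x j ^ 2 := by
          nlinarith [sq_nonneg (x j), mul_le_mul_of_nonneg_left hxj hβ]
  calc ∑ j ∈ univ.erase m, |f (x j)| * gaussianExcept x j
      ≤ ∑ j ∈ univ.erase m, (α + β * √ϱ) * (x j ^ 2 * gaussianExcept x j) :=
        sum_le_sum fun j _ => by
          rw [← mul_assoc]
          exact mul_le_mul_of_nonneg_right (hterm j) (gaussianExcept_pos x j).le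
    _ ≤ (α + β * √ϱ) * (ϱ * exp (-π * ϱ / 2)) := by
        rw [← mul_sum]
        gcongr
        exact sum_erase_sq_mul_gaussianExcept_le hm

lemma abs_sum_mul_gaussianExcept_le {f : ℝ → ℝ} {a D ν : ℝ} (hm : ∀ i, x i ^ 2 ≤ x m ^ 2)
    (hD : ∀ y, |f y| ≤ D * (a ^ 2 + y ^ 2)) (hν : 0 ≤ ν)
    (hf : ∀ y, |f y| ≤ (D + 5 * |a| * ν) * y ^ 2 + 2 * ν * |y| ^ 3) :
    |∑ j, f (x j) * gaussianExcept x j| ≤ (2 * D + 9 / 2 * ν) * (a ^ 2 + ∑ i, x i ^ 2) := by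
  have hD0 : 0 ≤ D := nonneg_of_mul_nonneg_left ((abs_nonneg _).trans (hD 1)) (by positivity)
  set ϱ := ∑ i, x i ^ 2
  have hϱ : 0 ≤ ϱ := sum_nonneg fun i _ => sq_nonneg (x i)
  set w := ϱ * exp (-π * ϱ / 2)
  have hsplit : |∑ j, f (x j) * gaussianExcept x j| ≤
      |f (x m)| + ∑ j ∈ univ.erase m, |f (x j)| * gaussianExcept x j := by
    rw [← add_sum_erase _ _ (mem_univ m)]
    refine (abs_add_le _ _).trans (add_le_add ?_ ((abs_sum_le_sum_abs _ _).trans_eq ?_))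
    · rw [abs_mul, abs_of_pos (gaussianExcept_pos x m)]
      exact mul_le_of_le_one_right (abs_nonneg _) (gaussianExcept_le_one x m)
    · exact sum_congr rfl fun j _ => by rw [abs_mul, abs_of_pos (gaussianExcept_pos x j)]
  have hmax : |f (x m)| ≤ D * (a ^ 2 + ϱ) :=
    (hD _).trans (by gcongr; exact single_le_sum (fun i _ => sq_nonneg (x i)) (mem_univ m))
  have hrest := sum_erase_abs_mul_gaussianExcept_le hm hf (by positivity) (by positivity)
  have hw : w ≤ ϱ := mul_le_of_le_one_right hϱ (exp_le_one_iff.2 (by nlinarith [pi_pos]))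
  have hw' : w ≤ √ϱ := mul_exp_neg_le_sqrt hϱ
  have hsq : √ϱ * √ϱ = ϱ := mul_self_sqrt hϱ
  have ham : |a| * √ϱ ≤ (a ^ 2 + ϱ) / 2 := by nlinarith [sq_nonneg (|a| - √ϱ), sq_abs a]
  have h1 : D * w ≤ D * ϱ := mul_le_mul_of_nonneg_left hw hD0
  have h2 : ν * (|a| * w) ≤ ν * ((a ^ 2 + ϱ) / 2) :=
    mul_le_mul_of_nonneg_left ((mul_le_mul_of_nonneg_left hw' (abs_nonneg a)).trans ham) hν
  have h3 : ν * (√ϱ * w) ≤ ν * ϱ :=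
    mul_le_mul_of_nonneg_left ((mul_le_mul_of_nonneg_left hw' (sqrt_nonneg ϱ)).trans hsq.le) hν
  nlinarith [mul_nonneg hD0 (sq_nonneg a), mul_nonneg hν (sq_nonneg a)]

end GaussianWeights

lemma DN_nonneg (N : ℕ) (f : ℝ → ℝ) (a : ℝ) : 0 ≤ DN N f a :=
  Real.iSup_nonneg fun _ => by positivity

lemma DN_le_of_abs_le {f : ℝ → ℝ} {a D ν : ℝ} (N : ℕ) (hD : ∀ y, |f y| ≤ D * (a ^ 2 + y ^ 2))
    (hν : 0 ≤ ν) (hf : ∀ y, |f y| ≤ (D + 5 * |a| * ν) * y ^ 2 + 2 * ν * |y| ^ 3) :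
    DN N f a ≤ 2 * D + 9 / 2 * ν := by
  have hD0 : 0 ≤ D := nonneg_of_mul_nonneg_left ((abs_nonneg _).trans (hD 1)) (by positivity)
  refine Real.iSup_le (fun ⟨x, hx⟩ => ?_) (by positivity)
  obtain ⟨i, hi⟩ := Function.ne_iff.1 hx
  obtain ⟨m, -, hm⟩ := exists_max_image univ (fun i => x i ^ 2) ⟨i, mem_univ i⟩
  have hpos : 0 < a ^ 2 + ∑ i, x i ^ 2 := add_pos_of_nonneg_of_pos (sq_nonneg a)
    ((pow_pos (abs_pos.2 hi) 2).trans_le (by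
      rw [sq_abs]; exact single_le_sum (fun i _ => sq_nonneg (x i)) (mem_univ i)))
  rw [div_le_iff₀ hpos]
  exact abs_sum_mul_gaussianExcept_le (fun j => hm j (mem_univ j)) hD hν hf

section OneDimensional

variable {f : ℝ → ℝ} {a K : ℝ}

lemma div_le_of_abs_le_mul_sq (hK : ∀ y, |f y| ≤ K * y ^ 2) (y : ℝ) :
    |f y| / (a ^ 2 + y ^ 2) ≤ K := by
  have hK0 : 0 ≤ K := by simpa using (abs_nonneg _).trans (hK 1)
  exact div_le_of_le_mul₀ (by positivity) hK0 ((hK y).trans (by nlinarith [sq_nonneg a]))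

lemma DN_one_le (hK : ∀ y, |f y| ≤ K * y ^ 2) : DN 1 f a ≤ K := by
  have hK0 : 0 ≤ K := by simpa using (abs_nonneg _).trans (hK 1)
  refine Real.iSup_le (fun η => ?_) hK0
  simpa using div_le_of_abs_le_mul_sq (a := a) hK (η.1 0)

lemma abs_le_DN_one_mul (hK : ∀ y, |f y| ≤ K * y ^ 2) (y : ℝ) :
    |f y| ≤ DN 1 f a * (a ^ 2 + y ^ 2) := by
  rcases eq_or_ne y 0 with rfl | hy
  · have : |f 0| ≤ 0 := by simpa using hK 0
    exact this.trans (mul_nonneg (DN_nonneg 1 f a) (by positivity))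
  have hbdd : BddAbove (Set.range fun η : {η : Fin 1 → ℝ // η ≠ 0} =>
      |∑ j, f (η.1 j) * ∏ i ∈ univ.erase j, exp (-π * η.1 i ^ 2)| / (a ^ 2 + ∑ i, η.1 i ^ 2)) := by
    refine ⟨K, ?_⟩
    rintro _ ⟨η, rfl⟩
    simpa using div_le_of_abs_le_mul_sq (a := a) hK (η.1 0)
  rw [← div_le_iff₀ (by positivity)]
  refine le_of_eq_of_le ?_ (le_ciSup hbdd ⟨fun _ => y, fun h => hy (congrFun h 0)⟩)
  simp

end OneDimensional

lemma two_mul_add_sqrt_le_sqrt {C D : ℝ} (hD : 0 ≤ D) (hDC : D ≤ C / 2) :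
    2 * D + 9 / 2 * √(D * (C / 24)) ≤ √((8 * C + D) * D) := by
  have hν := sq_sqrt (by nlinarith : 0 ≤ D * (C / 24))
  apply le_sqrt_of_sq_le
  nlinarith [sq_nonneg (D - √(D * (C / 24))), sqrt_nonneg (D * (C / 24))]

lemma abs_iteratedDeriv_le_derivBound4 {H : ℝ → ℝ}
    (hbdd : ∀ p : Fin 5, BddAbove (Set.range fun η => |iteratedDeriv (p : ℕ) H η|))
    {p : ℕ} (hp : p ≤ 4) (y : ℝ) : |iteratedDeriv p H y| ≤ derivBound4 H :=
  (le_ciSup (hbdd ⟨p, by omega⟩) y).trans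
    (le_ciSup (f := fun p : Fin 5 => ⨆ η, |iteratedDeriv (p : ℕ) H η|)
      (Set.finite_range _).bddAbove ⟨p, by omega⟩)

theorem DN_le_sqrt_general (H : ℝ → ℝ) (hC : ContDiff ℝ 4 H)
    (hbdd : ∀ p : Fin 5, BddAbove (Set.range fun η => |iteratedDeriv (p : ℕ) H η|))
    (hH0 : H 0 = 0) (heven : ∀ η, H η = H (-η))
    (a : ℝ) (N : ℕ) :
    DN N H a ≤ Real.sqrt ((8 * derivBound4 H + DN 1 H a) * DN 1 H a) := by
  have hodd : ∀ n, Odd n → iteratedDeriv n H 0 = 0 :=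
    fun _ => Function.Even.iteratedDeriv_zero_of_odd fun y => (heven y).symm
  have hquad : ∀ y, |H y| ≤ derivBound4 H / 2 * y ^ 2 := fun y => by
    have := abs_sub_taylor_le (n := 1) (hC.of_le (by norm_num))
      (abs_iteratedDeriv_le_derivBound4 hbdd (by norm_num)) 0 y
    simpa [sum_range_succ, hH0, hodd 1 odd_one, div_mul_eq_mul_div] using this
  have hquart : ∀ y, |H y - iteratedDeriv 2 H 0 / 2 * y ^ 2| ≤ derivBound4 H / 24 * y ^ 4 :=
    fun y => by
      have := abs_sub_taylor_le (n := 3) hC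
        (abs_iteratedDeriv_le_derivBound4 hbdd (by norm_num)) 0 y
      simpa [sum_range_succ, hH0, hodd 1 odd_one, hodd 3 (by decide), Nat.factorial,
        div_mul_eq_mul_div, (show Even 4 by decide).pow_abs y] using this
  have hD := abs_le_DN_one_mul (a := a) hquad
  calc DN N H a ≤ 2 * DN 1 H a + 9 / 2 * √(DN 1 H a * (derivBound4 H / 24)) :=
        DN_le_of_abs_le N hD (sqrt_nonneg _) (abs_le_of_quadratic_approx hD hquart)
    _ ≤ _ := two_mul_add_sqrt_le_sqrt (DN_nonneg 1 H a) (DN_one_le hquad)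

/-- **Proposition 4 (`estim`)**: for bounded even `C⁴` functions `H` with `H(0)=0`,
`D_N(H,a) ≤ √((8C₄ + D₁(H,a)) D₁(H,a))` for all `a ≥ 0`, `N ≥ 1`. -/
theorem DN_le_sqrt (H : ℝ → ℝ) (hC : ContDiff ℝ 4 H)
    (hbdd : ∀ p : Fin 5, BddAbove (Set.range fun η => |iteratedDeriv (p : ℕ) H η|))
    (hH0 : H 0 = 0) (heven : ∀ η, H η = H (-η))
    (a : ℝ) (ha : 0 ≤ a) (N : ℕ) (hN : 1 ≤ N) :
    DN N H a ≤ Real.sqrt ((8 * derivBound4 H + DN 1 H a) * DN 1 H a) :=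
  DN_le_sqrt_general H hC hbdd hH0 heven a N
end
end

section
/- Let H : ℝ → ℝ be a bounded C⁴ function with H(0) = 0, H even, and C_4 := max_{0≤p≤4} sup_η |H^{(p)}(η)| < ∞. Then for every a ≥ 0 and every N ≥ 1, D_N(H, a) ≤ max{ D_1(H, a), 2 D_1(H, 0) / (1 + (π/2) a²) }. -/
open MeasureTheory Real Filter

noncomputable section

lemma key_exp_fact (x : ℝ) (hx : 0 ≤ x) : x * Real.exp (-x) + Real.exp (-x) ≤ 1 := by
  have h1 := Real.add_one_le_exp x
  have h2 : Real.exp x * Real.exp (-x) = 1 := by rw [← Real.exp_add]; simp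
  nlinarith [Real.exp_pos (-x), Real.exp_pos x]

lemma key1 (p a u v B M : ℝ) (hp : 0 < p) (hu : 0 ≤ u) (hv : 0 ≤ v) (huv : u ≤ v)
    (hB : 0 ≤ B) (hM : 0 ≤ M) (hBM : 2 * B ≤ M * (1 + p / 2 * a ^ 2)) :
    B * u * Real.exp (-(p * v)) + M * (a ^ 2 + v) * Real.exp (-(p * u))
      ≤ M * (a ^ 2 + u + v) := by
  have hEu1 : Real.exp (-(p * u)) ≤ 1 := Real.exp_le_one_iff.mpr (by nlinarith)
  have hEv1 : Real.exp (-(p * v)) ≤ 1 := Real.exp_le_one_iff.mpr (by nlinarith)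
  have hEup : 0 < Real.exp (-(p * u)) := Real.exp_pos _
  have hEvp : 0 < Real.exp (-(p * v)) := Real.exp_pos _
  have hEvu : Real.exp (-(p * v)) ≤ Real.exp (-(p * u)) :=
    Real.exp_le_exp.mpr (by nlinarith)
  set Eu := Real.exp (-(p * u))
  set Ev := Real.exp (-(p * v))
  have hfact : p * u * Eu + Eu ≤ 1 := key_exp_fact (p * u) (by positivity)
  have ha2 : (0:ℝ) ≤ a ^ 2 := sq_nonneg a
  have hb : B ≤ M / 2 + M * (p * a ^ 2) / 4 := by nlinarith
  have h1 : B * u * Ev ≤ (M / 2 + M * (p * a ^ 2) / 4) * (u * Ev) := by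
    have := mul_le_mul_of_nonneg_right hb (mul_nonneg hu hEvp.le); nlinarith
  have h2 : u * Ev ≤ u := by nlinarith
  have h3 : u * Ev ≤ u * Eu := by nlinarith
  have t1 : B * u * Ev ≤ M / 2 * u + M * a ^ 2 / 4 * (p * u * Eu) := by
    nlinarith [mul_le_mul_of_nonneg_left h2 hM,
      mul_le_mul_of_nonneg_left h3 (by positivity : (0:ℝ) ≤ M * p * a ^ 2)]
  have t2 : M * (a ^ 2 + v) * Eu ≤ M * a ^ 2 * Eu + M * v := by
    nlinarith [mul_le_mul_of_nonneg_left hEu1 (mul_nonneg hM hv)]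
  have t3 : M * a ^ 2 * (p * u * Eu) ≤ M * a ^ 2 * (1 - Eu) := by
    have h4 : p * u * Eu ≤ 1 - Eu := by linarith
    exact mul_le_mul_of_nonneg_left h4 (mul_nonneg hM ha2)
  nlinarith [mul_le_mul_of_nonneg_left hEu1 (mul_nonneg hM ha2)]

lemma key2 (p a u v A B M : ℝ) (hp : 0 < p) (hu : 0 ≤ u) (hv : 0 ≤ v) (hvu : v ≤ u)
    (hB : 0 ≤ B) (hM : 0 ≤ M) (hAM : A ≤ M) (hA0 : 0 ≤ A)
    (hBM : 2 * B ≤ M * (1 + p / 2 * a ^ 2)) :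
    A * (a ^ 2 + u) * Real.exp (-(p * v)) + B * v * Real.exp (-(p * u))
      ≤ M * (a ^ 2 + u + v) := by
  have hEu1 : Real.exp (-(p * u)) ≤ 1 := Real.exp_le_one_iff.mpr (by nlinarith)
  have hEv1 : Real.exp (-(p * v)) ≤ 1 := Real.exp_le_one_iff.mpr (by nlinarith)
  have hEup : 0 < Real.exp (-(p * u)) := Real.exp_pos _
  have hEvp : 0 < Real.exp (-(p * v)) := Real.exp_pos _
  have hEuv : Real.exp (-(p * u)) ≤ Real.exp (-(p * v)) :=
    Real.exp_le_exp.mpr (by nlinarith)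
  set Eu := Real.exp (-(p * u))
  set Ev := Real.exp (-(p * v))
  have hfact : p * v * Ev + Ev ≤ 1 := key_exp_fact (p * v) (by positivity)
  have ha2 : (0:ℝ) ≤ a ^ 2 := sq_nonneg a
  have hb : B ≤ M / 2 + M * (p * a ^ 2) / 4 := by nlinarith
  -- A * (a^2+u) * Ev ≤ M*a^2*Ev + M*u
  have t1 : A * (a ^ 2 + u) * Ev ≤ M * a ^ 2 * Ev + M * u := by
    have h1 : A * (a ^ 2 + u) * Ev ≤ M * (a ^ 2 + u) * Ev := by
      have := mul_le_mul_of_nonneg_right (mul_le_mul_of_nonneg_right hAM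
        (by positivity : (0:ℝ) ≤ a ^ 2 + u)) hEvp.le
      linarith
    have h2 : M * u * Ev ≤ M * u :=  by
      nlinarith [mul_le_mul_of_nonneg_left hEv1 (mul_nonneg hM hu)]
    nlinarith
  -- B * v * Eu ≤ M/2 * v + M*a^2/4 * (p*v*Ev)
  have t2 : B * v * Eu ≤ M / 2 * v + M * a ^ 2 / 4 * (p * v * Ev) := by
    have h1 : B * v * Eu ≤ (M / 2 + M * (p * a ^ 2) / 4) * (v * Eu) := by
      have := mul_le_mul_of_nonneg_right hb (mul_nonneg hv hEup.le); nlinarith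
    have h2 : v * Eu ≤ v := by nlinarith
    have h3 : v * Eu ≤ v * Ev := by nlinarith
    nlinarith [mul_le_mul_of_nonneg_left h2 hM,
      mul_le_mul_of_nonneg_left h3 (by positivity : (0:ℝ) ≤ M * p * a ^ 2)]
  have t3 : M * a ^ 2 * (p * v * Ev) ≤ M * a ^ 2 * (1 - Ev) := by
    have h4 : p * v * Ev ≤ 1 - Ev := by linarith
    exact mul_le_mul_of_nonneg_left h4 (mul_nonneg hM ha2)
  nlinarith [mul_le_mul_of_nonneg_left hEv1 (mul_nonneg hM ha2)]

lemma quad_bound (H : ℝ → ℝ) (hC : ContDiff ℝ 4 H)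
    (hbdd : ∀ p : Fin 5, BddAbove (Set.range fun η => |iteratedDeriv (p : ℕ) H η|))
    (hH0 : H 0 = 0) (heven : ∀ η, H η = H (-η)) :
    ∃ C : ℝ, 0 ≤ C ∧ ∀ s, |H s| ≤ C * s ^ 2 := by
  have hb2 : BddAbove (Set.range fun η => |iteratedDeriv 2 H η|) := by
    have := hbdd 2
    norm_num at this ⊢
    exact this
  set C2 : ℝ := ⨆ η : ℝ, |iteratedDeriv 2 H η| with hC2
  have hit2 : ∀ y, iteratedDeriv 2 H y = deriv (deriv H) y := by
    intro y
    rw [show (2:ℕ) = 1 + 1 from rfl, iteratedDeriv_succ, iteratedDeriv_one]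
  have hC2b : ∀ y, |deriv (deriv H) y| ≤ C2 := by
    intro y
    have := le_ciSup hb2 y
    rwa [hit2] at this
  have hC2nn : 0 ≤ C2 := le_trans (abs_nonneg _) (hC2b 0)
  have hd1 : Differentiable ℝ H := hC.differentiable (by norm_num)
  have hC31 : ContDiff ℝ ((3:ℕ) + 1) H := by exact_mod_cast hC
  have hd2 : Differentiable ℝ (deriv H) :=
    ((contDiff_succ_iff_deriv.mp hC31).2.2).differentiable (by norm_num)
  have hderiv0 : deriv H 0 = 0 := by
    have hfun : H = fun x => H (-x) := funext heven
    have h := deriv_comp_neg H 0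
    rw [← hfun] at h
    simp only [neg_zero] at h
    linarith
  have step1 : ∀ x, |deriv H x| ≤ C2 * |x| := by
    intro x
    have h := Convex.norm_image_sub_le_of_norm_deriv_le (f := deriv H) (s := Set.univ)
      (fun y _ => hd2 y) (fun y _ => hC2b y)
      convex_univ (Set.mem_univ 0) (Set.mem_univ x)
    rw [hderiv0, sub_zero, sub_zero] at h
    simpa [Real.norm_eq_abs] using h
  refine ⟨C2, hC2nn, fun x => ?_⟩
  have hmem0 : (0:ℝ) ∈ Set.Icc (-|x|) |x| := by
    constructor <;> simp [abs_nonneg]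
  have hmemx : x ∈ Set.Icc (-|x|) |x| := ⟨neg_abs_le x, le_abs_self x⟩
  have hbnd : ∀ y ∈ Set.Icc (-|x|) (|x|), ‖deriv H y‖ ≤ C2 * |x| := by
    intro y hy
    have hyx : |y| ≤ |x| := abs_le.mpr ⟨hy.1, hy.2⟩
    calc ‖deriv H y‖ = |deriv H y| := Real.norm_eq_abs _
      _ ≤ C2 * |y| := step1 y
      _ ≤ C2 * |x| := mul_le_mul_of_nonneg_left hyx hC2nn
  have h := Convex.norm_image_sub_le_of_norm_deriv_le (f := H) (s := Set.Icc (-|x|) (|x|))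
    (fun y _ => hd1 y) hbnd (convex_Icc _ _) hmem0 hmemx
  rw [hH0, sub_zero, sub_zero] at h
  rw [Real.norm_eq_abs, Real.norm_eq_abs] at h
  calc |H x| ≤ C2 * |x| * |x| := h
    _ = C2 * x ^ 2 := by rw [mul_assoc, abs_mul_abs_self, sq]

lemma main_ind (H : ℝ → ℝ) (a A B M : ℝ) (hM0 : 0 ≤ M) (hB0 : 0 ≤ B) (hA0 : 0 ≤ A)
    (hA : ∀ s, |H s| ≤ A * (a ^ 2 + s ^ 2)) (hBb : ∀ s, |H s| ≤ B * s ^ 2)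
    (hAM : A ≤ M) (hBM : 2 * B ≤ M * (1 + Real.pi / 2 * a ^ 2)) :
    ∀ (N : ℕ) (η : Fin N → ℝ),
      |∑ j, H (η j) * ∏ i ∈ Finset.univ.erase j, Real.exp (-Real.pi * (η i) ^ 2)|
        ≤ M * (a ^ 2 + ∑ i, (η i) ^ 2) := by
  intro N
  induction N with
  | zero =>
      intro η
      simp only [Finset.univ_eq_empty, Finset.sum_empty, abs_zero]
      positivity
  | succ n ih =>
      intro η
      set η' : Fin n → ℝ := η ∘ Fin.castSucc with hη'
      set u : ℝ := (η (Fin.last n)) ^ 2 with hu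
      set v : ℝ := ∑ i, (η' i) ^ 2 with hv
      have hu0 : 0 ≤ u := sq_nonneg _
      have hv0 : 0 ≤ v := Finset.sum_nonneg fun i _ => sq_nonneg _
      have hexpne : ∀ x : ℝ, Real.exp (-Real.pi * x ^ 2) ≠ 0 := fun x => (Real.exp_pos _).ne'
      have hcs : ∀ j : Fin n, η (Fin.castSucc j) = η' j := fun j => rfl
      have hlastu : Real.exp (-Real.pi * (η (Fin.last n)) ^ 2) = Real.exp (-(Real.pi * u)) := by
        rw [hu]; ring_nf
      have hprodv : ∏ i, Real.exp (-Real.pi * (η' i) ^ 2) = Real.exp (-(Real.pi * v)) := by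
        rw [← Real.exp_sum]
        congr 1
        rw [hv, Finset.mul_sum, ← Finset.sum_neg_distrib]
        exact Finset.sum_congr rfl fun i _ => by ring
      -- full product over Fin (n+1)
      have hfull : ∏ i : Fin (n + 1), Real.exp (-Real.pi * (η i) ^ 2)
          = (∏ i : Fin n, Real.exp (-Real.pi * (η' i) ^ 2)) * Real.exp (-(Real.pi * u)) := by
        rw [Fin.prod_univ_castSucc, hlastu]
        have hpc : (∏ i : Fin n, Real.exp (-Real.pi * (η (Fin.castSucc i)) ^ 2))
            = ∏ i : Fin n, Real.exp (-Real.pi * (η' i) ^ 2) :=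
          Finset.prod_congr rfl fun i _ => by rw [hcs]
        rw [hpc]
      -- claim 1 : erase of castSucc j
      have claim1 : ∀ j : Fin n,
          ∏ i ∈ Finset.univ.erase (Fin.castSucc j), Real.exp (-Real.pi * (η i) ^ 2)
          = Real.exp (-(Real.pi * u)) *
              ∏ i ∈ Finset.univ.erase j, Real.exp (-Real.pi * (η' i) ^ 2) := by
        intro j
        have e1 : Real.exp (-Real.pi * (η (Fin.castSucc j)) ^ 2) *
            ∏ i ∈ Finset.univ.erase (Fin.castSucc j), Real.exp (-Real.pi * (η i) ^ 2)
            = ∏ i : Fin (n + 1), Real.exp (-Real.pi * (η i) ^ 2) :=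
          Finset.mul_prod_erase Finset.univ
            (fun i : Fin (n + 1) => Real.exp (-Real.pi * (η i) ^ 2)) (Finset.mem_univ _)
        have e2 : Real.exp (-Real.pi * (η' j) ^ 2) *
            ∏ i ∈ Finset.univ.erase j, Real.exp (-Real.pi * (η' i) ^ 2)
            = ∏ i : Fin n, Real.exp (-Real.pi * (η' i) ^ 2) :=
          Finset.mul_prod_erase Finset.univ
            (fun i : Fin n => Real.exp (-Real.pi * (η' i) ^ 2)) (Finset.mem_univ _)
        apply mul_left_cancel₀ (hexpne (η (Fin.castSucc j)))
        rw [e1, hfull, ← e2, hcs]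
        ring
      -- claim 2 : erase of last
      have claim2 : ∏ i ∈ Finset.univ.erase (Fin.last n), Real.exp (-Real.pi * (η i) ^ 2)
          = Real.exp (-(Real.pi * v)) := by
        have e3 : Real.exp (-Real.pi * (η (Fin.last n)) ^ 2) *
            ∏ i ∈ Finset.univ.erase (Fin.last n), Real.exp (-Real.pi * (η i) ^ 2)
            = ∏ i : Fin (n + 1), Real.exp (-Real.pi * (η i) ^ 2) :=
          Finset.mul_prod_erase Finset.univ
            (fun i : Fin (n + 1) => Real.exp (-Real.pi * (η i) ^ 2)) (Finset.mem_univ _)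
        apply mul_left_cancel₀ (hexpne (η (Fin.last n)))
        rw [e3, hfull, hprodv, hlastu]
        ring
      -- split the sum
      have hsplit : ∑ j, H (η j) * ∏ i ∈ Finset.univ.erase j, Real.exp (-Real.pi * (η i) ^ 2)
          = Real.exp (-(Real.pi * u)) *
              (∑ j, H (η' j) * ∏ i ∈ Finset.univ.erase j, Real.exp (-Real.pi * (η' i) ^ 2))
            + H (η (Fin.last n)) * Real.exp (-(Real.pi * v)) := by
        rw [Fin.sum_univ_castSucc, claim2]
        congr 1
        calc ∑ j : Fin n, H (η (Fin.castSucc j)) *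
              ∏ i ∈ Finset.univ.erase (Fin.castSucc j), Real.exp (-Real.pi * (η i) ^ 2)
            = ∑ j : Fin n, Real.exp (-(Real.pi * u)) *
                (H (η' j) * ∏ i ∈ Finset.univ.erase j, Real.exp (-Real.pi * (η' i) ^ 2)) := by
              refine Finset.sum_congr rfl fun j _ => ?_
              rw [claim1 j, hcs j]; ring
          _ = Real.exp (-(Real.pi * u)) *
              ∑ j, H (η' j) * ∏ i ∈ Finset.univ.erase j, Real.exp (-Real.pi * (η' i) ^ 2) :=
              (Finset.mul_sum _ _ _).symm
      have hsumsq : ∑ i, (η i) ^ 2 = v + u := by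
        rw [hv, hu, Fin.sum_univ_castSucc]; rfl
      rw [hsplit, hsumsq]
      set S' := ∑ j, H (η' j) * ∏ i ∈ Finset.univ.erase j, Real.exp (-Real.pi * (η' i) ^ 2)
        with hS'
      have habs : |Real.exp (-(Real.pi * u)) * S' + H (η (Fin.last n)) * Real.exp (-(Real.pi * v))|
          ≤ Real.exp (-(Real.pi * u)) * |S'| + |H (η (Fin.last n))| * Real.exp (-(Real.pi * v)) := by
        calc _ ≤ |Real.exp (-(Real.pi * u)) * S'| + |H (η (Fin.last n)) * Real.exp (-(Real.pi * v))| :=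
              abs_add_le _ _
          _ = Real.exp (-(Real.pi * u)) * |S'| + |H (η (Fin.last n))| * Real.exp (-(Real.pi * v)) := by
              rw [abs_mul, abs_mul, abs_of_pos (Real.exp_pos _), abs_of_pos (Real.exp_pos _)]
      have hSB : |S'| ≤ B * v := by
        calc |S'| ≤ ∑ j, |H (η' j) * ∏ i ∈ Finset.univ.erase j, Real.exp (-Real.pi * (η' i) ^ 2)| :=
              Finset.abs_sum_le_sum_abs _ _
          _ ≤ ∑ j, B * (η' j) ^ 2 := by
              refine Finset.sum_le_sum fun j _ => ?_
              rw [abs_mul]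
              have hp1 : |∏ i ∈ Finset.univ.erase j, Real.exp (-Real.pi * (η' i) ^ 2)| ≤ 1 := by
                rw [abs_of_pos (Finset.prod_pos fun i _ => Real.exp_pos _)]
                exact Finset.prod_le_one (fun i _ => (Real.exp_pos _).le)
                  (fun i _ => Real.exp_le_one_iff.mpr
                    (by nlinarith [Real.pi_pos, sq_nonneg (η' i)]))
              calc |H (η' j)| * |∏ i ∈ Finset.univ.erase j, Real.exp (-Real.pi * (η' i) ^ 2)|
                  ≤ |H (η' j)| * 1 := mul_le_mul_of_nonneg_left hp1 (abs_nonneg _)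
                _ = |H (η' j)| := mul_one _
                _ ≤ B * (η' j) ^ 2 := hBb _
          _ = B * v := by rw [hv, Finset.mul_sum]
      rcases le_total u v with huv | hvu
      · have hSM : |S'| ≤ M * (a ^ 2 + v) := by
          have := ih η'; rw [← hv] at this; exact this
        have hHl : |H (η (Fin.last n))| ≤ B * u := by
          have := hBb (η (Fin.last n)); rw [← hu] at this; exact this
        calc |Real.exp (-(Real.pi * u)) * S' + H (η (Fin.last n)) * Real.exp (-(Real.pi * v))|
            ≤ Real.exp (-(Real.pi * u)) * |S'| + |H (η (Fin.last n))| * Real.exp (-(Real.pi * v)) :=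
              habs
          _ ≤ Real.exp (-(Real.pi * u)) * (M * (a ^ 2 + v)) + (B * u) * Real.exp (-(Real.pi * v)) := by
              gcongr <;> positivity
          _ = B * u * Real.exp (-(Real.pi * v)) + M * (a ^ 2 + v) * Real.exp (-(Real.pi * u)) := by
              ring
          _ ≤ M * (a ^ 2 + u + v) :=
              key1 Real.pi a u v B M Real.pi_pos hu0 hv0 huv hB0 hM0 hBM
          _ = M * (a ^ 2 + (v + u)) := by ring
      · have hHl : |H (η (Fin.last n))| ≤ A * (a ^ 2 + u) := by
          have := hA (η (Fin.last n)); rw [← hu] at this; exact this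
        calc |Real.exp (-(Real.pi * u)) * S' + H (η (Fin.last n)) * Real.exp (-(Real.pi * v))|
            ≤ Real.exp (-(Real.pi * u)) * |S'| + |H (η (Fin.last n))| * Real.exp (-(Real.pi * v)) :=
              habs
          _ ≤ Real.exp (-(Real.pi * u)) * (B * v) + (A * (a ^ 2 + u)) * Real.exp (-(Real.pi * v)) := by
              gcongr <;> positivity
          _ = A * (a ^ 2 + u) * Real.exp (-(Real.pi * v)) + B * v * Real.exp (-(Real.pi * u)) := by
              ring
          _ ≤ M * (a ^ 2 + u + v) :=
              key2 Real.pi a u v A B M Real.pi_pos hu0 hv0 hvu hB0 hM0 hAM hA0 hBM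
          _ = M * (a ^ 2 + (v + u)) := by ring

lemma DN_one_eval (H : ℝ → ℝ) (η : Fin 1 → ℝ) :
    (∑ j, H (η j) * ∏ i ∈ Finset.univ.erase j, Real.exp (-Real.pi * (η i) ^ 2)) = H (η 0) := by
  rw [Fin.sum_univ_one]
  have h : (Finset.univ.erase (0 : Fin 1)) = ∅ := rfl
  rw [h, Finset.prod_empty, mul_one]

lemma DN_nonneg_s14 (N : ℕ) (H : ℝ → ℝ) (b : ℝ) : 0 ≤ DN N H b :=
  Real.iSup_nonneg fun η => by positivity

lemma DN_one_bdd (H : ℝ → ℝ) (b C : ℝ) (hC0 : 0 ≤ C) (hC : ∀ s, |H s| ≤ C * s ^ 2) :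
    BddAbove (Set.range fun η : {η : Fin 1 → ℝ // η ≠ 0} =>
      |∑ j, H (η.1 j) * ∏ i ∈ Finset.univ.erase j, Real.exp (-Real.pi * (η.1 i) ^ 2)| /
        (b ^ 2 + ∑ i, (η.1 i) ^ 2)) := by
  refine ⟨C, ?_⟩
  rintro x ⟨η, rfl⟩
  have hs : η.1 0 ≠ 0 := by
    intro h
    exact η.2 (funext fun i => by rw [Subsingleton.elim i 0]; exact h)
  have hpos : 0 < b ^ 2 + ∑ i, (η.1 i) ^ 2 := by
    rw [Fin.sum_univ_one]; positivity
  rw [div_le_iff₀ hpos, DN_one_eval, Fin.sum_univ_one]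
  have h1 := hC (η.1 0)
  nlinarith [sq_nonneg b, abs_nonneg (H (η.1 0))]

lemma abs_le_DN_one (H : ℝ → ℝ) (b C : ℝ) (hC0 : 0 ≤ C) (hC : ∀ s, |H s| ≤ C * s ^ 2)
    (hH0 : H 0 = 0) (s : ℝ) : |H s| ≤ DN 1 H b * (b ^ 2 + s ^ 2) := by
  rcases eq_or_ne s 0 with rfl | hs
  · rw [hH0]
    simp only [abs_zero]
    have := DN_nonneg_s14 1 H b
    positivity
  · set ηs : {η : Fin 1 → ℝ // η ≠ 0} :=
      ⟨fun _ => s, fun h => hs (congrFun h 0)⟩ with hηs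
    have hle := le_ciSup (DN_one_bdd H b C hC0 hC) ηs
    have hval : (|∑ j, H (ηs.1 j) * ∏ i ∈ Finset.univ.erase j,
          Real.exp (-Real.pi * (ηs.1 i) ^ 2)| / (b ^ 2 + ∑ i, (ηs.1 i) ^ 2))
        = |H s| / (b ^ 2 + s ^ 2) := by
      rw [DN_one_eval, Fin.sum_univ_one]
    have hDN : DN 1 H b = ⨆ η : {η : Fin 1 → ℝ // η ≠ 0},
        |∑ j, H (η.1 j) * ∏ i ∈ Finset.univ.erase j, Real.exp (-Real.pi * (η.1 i) ^ 2)| /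
          (b ^ 2 + ∑ i, (η.1 i) ^ 2) := rfl
    rw [hval] at hle
    rw [← hDN] at hle
    have hpos : 0 < b ^ 2 + s ^ 2 := by positivity
    calc |H s| = |H s| / (b ^ 2 + s ^ 2) * (b ^ 2 + s ^ 2) := by field_simp
      _ ≤ DN 1 H b * (b ^ 2 + s ^ 2) := by
          exact mul_le_mul_of_nonneg_right hle hpos.le


/-- **Eq. (4.34)**: `D_N(H,a) ≤ max{D₁(H,a), 2 D₁(H,0)/(1 + (π/2)a²)}`. -/
theorem DN_le_max (H : ℝ → ℝ) (hC : ContDiff ℝ 4 H)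
    (hbdd : ∀ p : Fin 5, BddAbove (Set.range fun η => |iteratedDeriv (p : ℕ) H η|))
    (hH0 : H 0 = 0) (heven : ∀ η, H η = H (-η))
    (a : ℝ) (ha : 0 ≤ a) (N : ℕ) (hN : 1 ≤ N) :
    DN N H a ≤ max (DN 1 H a) (2 * DN 1 H 0 / (1 + Real.pi / 2 * a ^ 2)) := by
  obtain ⟨C, hC0, hCb⟩ := quad_bound H hC hbdd hH0 heven
  set B := DN 1 H 0 with hB
  set A := DN 1 H a with hA
  set M := max A (2 * B / (1 + Real.pi / 2 * a ^ 2)) with hM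
  have hB0 : 0 ≤ B := DN_nonneg_s14 1 H 0
  have hA0 : 0 ≤ A := DN_nonneg_s14 1 H a
  have hAM : A ≤ M := le_max_left _ _
  have hM0 : 0 ≤ M := le_trans hA0 hAM
  have hdpos : (0:ℝ) < 1 + Real.pi / 2 * a ^ 2 := by positivity
  have hBM : 2 * B ≤ M * (1 + Real.pi / 2 * a ^ 2) := by
    have h := le_max_right A (2 * B / (1 + Real.pi / 2 * a ^ 2))
    rw [div_le_iff₀ hdpos] at h
    exact h
  have hBle : ∀ s, |H s| ≤ B * s ^ 2 := by
    intro s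
    have := abs_le_DN_one H 0 C hC0 hCb hH0 s
    calc |H s| ≤ DN 1 H 0 * (0 ^ 2 + s ^ 2) := this
      _ = B * s ^ 2 := by rw [← hB]; ring
  have hAle : ∀ s, |H s| ≤ A * (a ^ 2 + s ^ 2) := fun s => abs_le_DN_one H a C hC0 hCb hH0 s
  haveI : Nonempty {η : Fin N → ℝ // η ≠ 0} :=
    ⟨⟨fun _ => 1, fun h => by have := congrFun h ⟨0, hN⟩; norm_num at this⟩⟩
  have hfin : DN N H a ≤ M := by
    rw [show DN N H a = ⨆ η : {η : Fin N → ℝ // η ≠ 0},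
        |∑ j, H (η.1 j) * ∏ i ∈ Finset.univ.erase j, Real.exp (-Real.pi * (η.1 i) ^ 2)| /
          (a ^ 2 + ∑ i, (η.1 i) ^ 2) from rfl]
    refine ciSup_le fun η => ?_
    have hpos : 0 < a ^ 2 + ∑ i, (η.1 i) ^ 2 := by
      obtain ⟨i, hi⟩ := Function.ne_iff.mp η.2
      have h1 : (η.1 i) ^ 2 ≤ ∑ i, (η.1 i) ^ 2 :=
        Finset.single_le_sum (f := fun j => (η.1 j) ^ 2) (fun j _ => sq_nonneg _) (Finset.mem_univ i)
      have h2 : 0 < (η.1 i) ^ 2 := by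
        have h3 := abs_pos.mpr hi
        nlinarith [sq_abs (η.1 i)]
      nlinarith [sq_nonneg a]
    rw [div_le_iff₀ hpos]
    exact main_ind H a A B M hM0 hB0 hA0 hAle hBle hAM hBM N η.1
  exact hfin
end
end
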